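/- arXiv:2301.00204 — 2 statements merged into one kernel-verified Lean document; each statement's English description precedes it below -/
import Mathlib

section
/- (Liouville–Ostrogradsky) For any w ∈ ℂ: (i) Q_k(w) (P_k(w̄))* = P_k(w) (Q_k(w̄))* for all k ≥ 0, and (ii) Q_k(w)(P_{k-1}(w̄))* − P_k(w)(Q_{k-1}(w̄))* = A_{k-1}^{-1} for all k ≥ 1. -/
open Matrix

/-- Generic noncommutative-ring step lemma for the Liouville–Ostrogradsky induction. -/
lemma lo_step {R : Type*} [Ring R] (W B b bh p q p' q' tp tq tp' tq' : R)
    (hW : ∀ x : R, x * W = W * x)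
    (h1 : q * tp = p * tq)
    (h2 : (q * tp' - p * tq') * b = 1)
    (h3 : bh * (q' * tp - p' * tq) = -1)
    (h4 : q' * tp' = p' * tq') :
    ((W * q - B * q - bh * q') * tp - (W * p - B * p - bh * p') * tq = 1) ∧
    (q * (W * tp - tp * B - tp' * b) - p * (W * tq - tq * B - tq' * b) = -1) ∧
    ((W * q - B * q - bh * q') * (W * tp - tp * B - tp' * b)
      = (W * p - B * p - bh * p') * (W * tq - tq * B - tq' * b)) := by
  have c2 : (W * q - B * q - bh * q') * tp - (W * p - B * p - bh * p') * tq = 1 := by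
    have e : (W * q - B * q - bh * q') * tp - (W * p - B * p - bh * p') * tq
        = W * (q * tp - p * tq) - B * (q * tp - p * tq) - bh * (q' * tp - p' * tq) := by
      noncomm_ring
    rw [e, h1, h3]
    simp
  refine ⟨c2, ?_, ?_⟩
  · calc q * (W * tp - tp * B - tp' * b) - p * (W * tq - tq * B - tq' * b)
        = (q * W) * tp - (p * W) * tq - ((q * tp - p * tq) * B) - ((q * tp' - p * tq') * b) := by
          noncomm_ring
      _ = W * (q * tp) - W * (p * tq) - ((q * tp - p * tq) * B) - ((q * tp' - p * tq') * b) := by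
          rw [hW q, hW p, mul_assoc, mul_assoc]
      _ = -1 := by rw [h1, h2]; simp
  · have hD1 : (W * q - B * q - bh * q') * tp' - (W * p - B * p - bh * p') * tq'
        = W * (q * tp' - p * tq') - B * (q * tp' - p * tq') := by
      have e : (W * q - B * q - bh * q') * tp' - (W * p - B * p - bh * p') * tq'
          = W * (q * tp' - p * tq') - B * (q * tp' - p * tq') - bh * (q' * tp' - p' * tq') := by
        noncomm_ring
      rw [e, h4]
      simp
    have key : (W * q - B * q - bh * q') * (W * tp - tp * B - tp' * b)
        - (W * p - B * p - bh * p') * (W * tq - tq * B - tq' * b) = 0 := by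
      calc (W * q - B * q - bh * q') * (W * tp - tp * B - tp' * b)
          - (W * p - B * p - bh * p') * (W * tq - tq * B - tq' * b)
          = ((W * q - B * q - bh * q') * W) * tp - ((W * p - B * p - bh * p') * W) * tq
            - (((W * q - B * q - bh * q') * tp - (W * p - B * p - bh * p') * tq) * B)
            - (((W * q - B * q - bh * q') * tp' - (W * p - B * p - bh * p') * tq') * b) := by
            noncomm_ring
        _ = W * ((W * q - B * q - bh * q') * tp) - W * ((W * p - B * p - bh * p') * tq)
            - (((W * q - B * q - bh * q') * tp - (W * p - B * p - bh * p') * tq) * B)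
            - (((W * q - B * q - bh * q') * tp' - (W * p - B * p - bh * p') * tq') * b) := by
            rw [hW (W * q - B * q - bh * q'), hW (W * p - B * p - bh * p'), mul_assoc, mul_assoc]
        _ = W * ((W * q - B * q - bh * q') * tp - (W * p - B * p - bh * p') * tq)
            - (((W * q - B * q - bh * q') * tp - (W * p - B * p - bh * p') * tq) * B)
            - ((W * (q * tp' - p * tq') - B * (q * tp' - p * tq')) * b) := by
            rw [hD1]; noncomm_ring
        _ = W * 1 - 1 * B - (W * ((q * tp' - p * tq') * b) - B * ((q * tp' - p * tq') * b)) := by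
            rw [c2]; noncomm_ring
        _ = 0 := by rw [h2]; simp
    exact sub_eq_zero.mp key

/-- Liouville–Ostrogradsky formulae: for every `w ∈ ℂ`,
`Q_k(w) (P_k(w̄))* = P_k(w) (Q_k(w̄))*` for `k ≥ 0`, and
`Q_k(w)(P_{k-1}(w̄))* − P_k(w)(Q_{k-1}(w̄))* = A_{k-1}⁻¹` for `k ≥ 1`. -/
theorem liouville_ostrogradsky {d : ℕ} (A B : ℤ → Matrix (Fin d) (Fin d) ℂ)
    (hA : ∀ n : ℤ, 0 ≤ n → IsUnit (A n)) (hAm : A (-1) = -1)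
    (hB : ∀ n : ℤ, 0 ≤ n → (B n).IsHermitian)
    (P Q : ℂ → ℤ → Matrix (Fin d) (Fin d) ℂ)
    (hP : ∀ z : ℂ, ∀ n : ℤ, 0 ≤ n →
      (A (n - 1))ᴴ * P z (n - 1) + B n * P z n + A n * P z (n + 1) = z • P z n)
    (hPm : ∀ z : ℂ, P z (-1) = 0) (hP0 : ∀ z : ℂ, P z 0 = 1)
    (hQ : ∀ z : ℂ, ∀ n : ℤ, 0 ≤ n →
      (A (n - 1))ᴴ * Q z (n - 1) + B n * Q z n + A n * Q z (n + 1) = z • Q z n)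
    (hQm : ∀ z : ℂ, Q z (-1) = 1) (hQ0 : ∀ z : ℂ, Q z 0 = 0)
    (w : ℂ) :
    (∀ k : ℤ, 0 ≤ k →
      Q w k * (P (starRingEnd ℂ w) k)ᴴ = P w k * (Q (starRingEnd ℂ w) k)ᴴ) ∧
    (∀ k : ℤ, 1 ≤ k →
      Q w k * (P (starRingEnd ℂ w) (k - 1))ᴴ - P w k * (Q (starRingEnd ℂ w) (k - 1))ᴴ =
        (A (k - 1))⁻¹) := by
  set cw : ℂ := starRingEnd ℂ w with hcw
  have hW : ∀ x : Matrix (Fin d) (Fin d) ℂ,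
      x * (w • (1 : Matrix (Fin d) (Fin d) ℂ)) = (w • 1) * x := by
    intro x
    rw [mul_smul_comm, smul_mul_assoc, mul_one, one_mul]
  -- rearranged recurrences
  have hrecP : ∀ z : ℂ, ∀ n : ℤ, 0 ≤ n →
      A n * P z (n + 1) = z • P z n - B n * P z n - (A (n - 1))ᴴ * P z (n - 1) := by
    intro z n hn
    rw [← hP z n hn]; abel
  have hrecQ : ∀ z : ℂ, ∀ n : ℤ, 0 ≤ n →
      A n * Q z (n + 1) = z • Q z n - B n * Q z n - (A (n - 1))ᴴ * Q z (n - 1) := by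
    intro z n hn
    rw [← hQ z n hn]; abel
  -- conjugate-transposed recurrences at cw
  have hrecPc : ∀ n : ℤ, 0 ≤ n →
      (P cw (n + 1))ᴴ * (A n)ᴴ
        = w • (P cw n)ᴴ - (P cw n)ᴴ * B n - (P cw (n - 1))ᴴ * A (n - 1) := by
    intro n hn
    have h2 := congrArg conjTranspose (hrecP cw n hn)
    simp only [conjTranspose_mul, conjTranspose_sub, conjTranspose_smul,
      conjTranspose_conjTranspose, hcw, starRingEnd_apply, star_star, (hB n hn).eq] at h2
    exact h2
  have hrecQc : ∀ n : ℤ, 0 ≤ n →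
      (Q cw (n + 1))ᴴ * (A n)ᴴ
        = w • (Q cw n)ᴴ - (Q cw n)ᴴ * B n - (Q cw (n - 1))ᴴ * A (n - 1) := by
    intro n hn
    have h2 := congrArg conjTranspose (hrecQ cw n hn)
    simp only [conjTranspose_mul, conjTranspose_sub, conjTranspose_smul,
      conjTranspose_conjTranspose, hcw, starRingEnd_apply, star_star, (hB n hn).eq] at h2
    exact h2
  have main : ∀ k : ℤ, 0 ≤ k →
      (Q w k * (P cw k)ᴴ = P w k * (Q cw k)ᴴ) ∧
      ((Q w k * (P cw (k - 1))ᴴ - P w k * (Q cw (k - 1))ᴴ) * A (k - 1) = 1) ∧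
      ((A (k - 1))ᴴ * (Q w (k - 1) * (P cw k)ᴴ - P w (k - 1) * (Q cw k)ᴴ) = -1) ∧
      (Q w (k - 1) * (P cw (k - 1))ᴴ = P w (k - 1) * (Q cw (k - 1))ᴴ) := by
    refine Int.le_induction ?_ ?_
    · norm_num [hP0, hQ0, hPm, hQm, hAm]
    · intro n hn ih
      obtain ⟨i1, i2, i3, i4⟩ := ih
      obtain ⟨c2, c3, c1⟩ := lo_step (w • (1 : Matrix (Fin d) (Fin d) ℂ)) (B n) (A (n - 1))
        ((A (n - 1))ᴴ) (P w n) (Q w n) (P w (n - 1)) (Q w (n - 1))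
        ((P cw n)ᴴ) ((Q cw n)ᴴ) ((P cw (n - 1))ᴴ) ((Q cw (n - 1))ᴴ) hW i1 i2 i3 i4
      simp only [smul_mul_assoc, one_mul] at c1 c2 c3
      rw [← hrecP w n hn, ← hrecQ w n hn] at c2
      rw [← hrecPc n hn, ← hrecQc n hn] at c3
      rw [← hrecP w n hn, ← hrecQ w n hn, ← hrecPc n hn, ← hrecQc n hn] at c1
      have hdet : IsUnit (A n).det := (Matrix.isUnit_iff_isUnit_det _).mp (hA n hn)
      have hdetH : IsUnit ((A n)ᴴ).det := by
        rw [Matrix.det_conjTranspose]; exact hdet.star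
      -- part (2) at n+1
      have part2 : (Q w (n + 1) * (P cw n)ᴴ - P w (n + 1) * (Q cw n)ᴴ) * A n = 1 := by
        have c2' : A n * (Q w (n + 1) * (P cw n)ᴴ - P w (n + 1) * (Q cw n)ᴴ) = 1 := by
          rw [mul_sub, ← mul_assoc, ← mul_assoc]
          exact c2
        exact mul_eq_one_comm.mp c2'
      -- part (3) at n+1
      have part3 : (A n)ᴴ * (Q w n * (P cw (n + 1))ᴴ - P w n * (Q cw (n + 1))ᴴ) = -1 := by
        have c3' : (Q w n * (P cw (n + 1))ᴴ - P w n * (Q cw (n + 1))ᴴ) * (A n)ᴴ = -1 := by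
          rw [sub_mul, mul_assoc, mul_assoc]
          exact c3
        have h' : (-(Q w n * (P cw (n + 1))ᴴ - P w n * (Q cw (n + 1))ᴴ)) * (A n)ᴴ = 1 := by
          rw [neg_mul, c3', neg_neg]
        have h'' := mul_eq_one_comm.mp h'
        rw [mul_neg] at h''
        exact neg_eq_iff_eq_neg.mp h''
      -- part (1) at n+1
      have part1 : Q w (n + 1) * (P cw (n + 1))ᴴ = P w (n + 1) * (Q cw (n + 1))ᴴ := by
        have hz : A n * (Q w (n + 1) * (P cw (n + 1))ᴴ - P w (n + 1) * (Q cw (n + 1))ᴴ) * (A n)ᴴ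
            = 0 := by
          have e : A n * (Q w (n + 1) * (P cw (n + 1))ᴴ - P w (n + 1) * (Q cw (n + 1))ᴴ) * (A n)ᴴ
              = (A n * Q w (n + 1)) * ((P cw (n + 1))ᴴ * (A n)ᴴ)
                - (A n * P w (n + 1)) * ((Q cw (n + 1))ᴴ * (A n)ᴴ) := by
            noncomm_ring
          rw [e, c1, sub_self]
        have hzero : Q w (n + 1) * (P cw (n + 1))ᴴ - P w (n + 1) * (Q cw (n + 1))ᴴ = 0 := by
          calc Q w (n + 1) * (P cw (n + 1))ᴴ - P w (n + 1) * (Q cw (n + 1))ᴴ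
              = ((A n)⁻¹ * A n)
                * (Q w (n + 1) * (P cw (n + 1))ᴴ - P w (n + 1) * (Q cw (n + 1))ᴴ)
                * ((A n)ᴴ * ((A n)ᴴ)⁻¹) := by
                rw [Matrix.nonsing_inv_mul _ hdet, Matrix.mul_nonsing_inv _ hdetH,
                  one_mul, mul_one]
            _ = (A n)⁻¹
                * (A n * (Q w (n + 1) * (P cw (n + 1))ᴴ - P w (n + 1) * (Q cw (n + 1))ᴴ) * (A n)ᴴ)
                * ((A n)ᴴ)⁻¹ := by noncomm_ring
            _ = 0 := by rw [hz]; simp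
        exact sub_eq_zero.mp hzero
      refine ⟨part1, ?_, ?_, ?_⟩
      · simpa using part2
      · simpa using part3
      · simpa using i1
  constructor
  · intro k hk
    exact (main k hk).1
  · intro k hk
    have h := (main k (by linarith)).2.1
    exact (Matrix.inv_eq_left_inv h).symm
end

section
/- If u = (u_n)_{n≥−1} is an extended vector generalized eigenvector for λ ∈ ℝ, then for every t ≥ 1: (1/2)(‖u_{−1}‖² + ‖u_0‖²) ⌊R(λ)⌋²_{[1,t]} ≤ ‖u‖²_{[0,t]} ≤ (‖u_{−1}‖² + ‖u_0‖²) ‖R(λ)‖²_{[1,t]}, where R_n(λ) = T_{n-1}(λ)···T_0(λ) are the n-step transfer matrices, ‖R(λ)‖²_{[1,t]} = ∑_{k=1}^{⌊t⌋}‖R_k(λ)‖² + {t}‖R_{⌊t⌋+1}(λ)‖², and ⌊R(λ)⌋²_{[1,t]} is defined analogously using the minimum modulus ⌊A⌋ = inf_{‖x‖=1}‖Ax‖. -/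
/-! The pairs `w_n = (u_{n-1}, u_n)` satisfy `w_{n+1} = T_n(λ) w_n`, so `w_n = R_n(λ) w_0` and
`⌊R_n⌋² ‖w_0‖² ≤ ‖u_{n-1}‖² + ‖u_n‖² ≤ ‖R_n‖² ‖w_0‖²`. Summing over `1 ≤ n ≤ ⌊t⌋` counts every
`‖u_k‖²` with `0 ≤ k ≤ ⌊t⌋` at least once and at most twice, which gives both bounds up to the
factor `1/2`; the fractional term uses `‖u_{⌊t⌋+1}‖² ≤ ‖w_{⌊t⌋+1}‖²`. -/

open Matrix

/-- Operator norm of a complex square matrix (acting on Euclidean space). -/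
noncomputable def opNorm {n : Type*} [Fintype n] [DecidableEq n] (X : Matrix n n ℂ) : ℝ :=
  ‖Matrix.toEuclideanCLM (𝕜 := ℂ) (n := n) X‖

/-- Minimum modulus `⌊X⌋ = inf_{‖v‖=1} ‖Xv‖`. -/
noncomputable def minMod {n : Type*} [Fintype n] [DecidableEq n] (X : Matrix n n ℂ) : ℝ :=
  ⨅ v : {v : EuclideanSpace ℂ n // ‖v‖ = 1}, ‖Matrix.toEuclideanCLM (𝕜 := ℂ) X v.1‖

/-- Euclidean norm of a vector in `ℂ^d`. -/
noncomputable def vnorm {d : ℕ} (v : Fin d → ℂ) : ℝ :=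
  Real.sqrt (∑ i, ‖v i‖ ^ 2)

/-- One-step transfer matrix `T_n(λ)`. -/
noncomputable def transferT {d : ℕ} (A B : ℤ → Matrix (Fin d) (Fin d) ℂ) (lam : ℝ)
    (n : ℕ) : Matrix (Fin d ⊕ Fin d) (Fin d ⊕ Fin d) ℂ :=
  Matrix.fromBlocks 0 1 (-((A (n : ℤ))⁻¹ * (A ((n : ℤ) - 1))ᴴ))
    ((A (n : ℤ))⁻¹ * ((lam : ℂ) • 1 - B (n : ℤ)))

/-- `n`-step transfer matrix `R_n(λ) = T_{n-1}(λ)···T_0(λ)`, `R_0(λ) = I`. -/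
noncomputable def transferR {d : ℕ} (A B : ℤ → Matrix (Fin d) (Fin d) ℂ) (lam : ℝ) :
    ℕ → Matrix (Fin d ⊕ Fin d) (Fin d ⊕ Fin d) ℂ
  | 0 => 1
  | n + 1 => transferT A B lam n * transferR A B lam n

lemma minMod_mul_norm_le {n : Type*} [Fintype n] [DecidableEq n] (X : Matrix n n ℂ)
    (v : EuclideanSpace ℂ n) : minMod X * ‖v‖ ≤ ‖toEuclideanCLM (𝕜 := ℂ) X v‖ := by
  rcases eq_or_ne v 0 with rfl | hv
  · simp
  have hle : minMod X ≤ ‖toEuclideanCLM (𝕜 := ℂ) X ((‖v‖⁻¹ : ℂ) • v)‖ := by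
    refine ciInf_le ⟨0, ?_⟩ (⟨_, norm_smul_inv_norm hv⟩ : {w : EuclideanSpace ℂ n // ‖w‖ = 1})
    rintro _ ⟨w, rfl⟩
    positivity
  rw [map_smul, norm_smul, norm_inv, Complex.norm_real, norm_norm] at hle
  rwa [← le_div_iff₀ (norm_pos_iff.mpr hv), div_eq_inv_mul]

lemma minMod_sq_mul_norm_sq_le {n : Type*} [Fintype n] [DecidableEq n] (X : Matrix n n ℂ)
    (v : EuclideanSpace ℂ n) : minMod X ^ 2 * ‖v‖ ^ 2 ≤ ‖toEuclideanCLM (𝕜 := ℂ) X v‖ ^ 2 := by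
  rw [← mul_pow]
  exact pow_le_pow_left₀ (mul_nonneg (Real.iInf_nonneg fun _ => norm_nonneg _) (norm_nonneg _))
    (minMod_mul_norm_le X v) 2

lemma norm_sq_le_opNorm_sq_mul_norm_sq {n : Type*} [Fintype n] [DecidableEq n]
    (X : Matrix n n ℂ) (v : EuclideanSpace ℂ n) :
    ‖toEuclideanCLM (𝕜 := ℂ) X v‖ ^ 2 ≤ opNorm X ^ 2 * ‖v‖ ^ 2 := by
  rw [← mul_pow]
  exact pow_le_pow_left₀ (norm_nonneg _) ((toEuclideanCLM (𝕜 := ℂ) X).le_opNorm v) 2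

lemma vnorm_eq_norm_toLp {d : ℕ} (v : Fin d → ℂ) :
    vnorm v = ‖(WithLp.toLp 2 v : EuclideanSpace ℂ (Fin d))‖ :=
  (EuclideanSpace.norm_eq _).symm

lemma norm_toLp_sum_elim_sq {d : ℕ} (x y : Fin d → ℂ) :
    ‖(WithLp.toLp 2 (Sum.elim x y) : EuclideanSpace ℂ (Fin d ⊕ Fin d))‖ ^ 2 =
      vnorm x ^ 2 + vnorm y ^ 2 := by
  simp only [vnorm_eq_norm_toLp, EuclideanSpace.norm_sq_eq, Fintype.sum_sum_type]
  rfl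

lemma transferT_mulVec {d : ℕ} {A B : ℤ → Matrix (Fin d) (Fin d) ℂ} {lam : ℝ}
    {u : ℤ → Fin d → ℂ} {n : ℕ} (hA : IsUnit (A n))
    (hu : (A (n - 1))ᴴ *ᵥ u (n - 1) + B n *ᵥ u n + A n *ᵥ u (n + 1) = (lam : ℂ) • u n) :
    transferT A B lam n *ᵥ Sum.elim (u (n - 1)) (u n) = Sum.elim (u n) (u (n + 1)) := by
  have hAu : A n *ᵥ u (n + 1) = ((lam : ℂ) • 1 - B n) *ᵥ u n - (A (n - 1))ᴴ *ᵥ u (n - 1) := by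
    rw [sub_mulVec, smul_mulVec, one_mulVec, ← hu]
    abel
  have hinv : (A n)⁻¹ * A n = 1 := nonsing_inv_mul _ ((isUnit_iff_isUnit_det _).mp hA)
  rw [transferT, fromBlocks_mulVec, Sum.elim_comp_inl, Sum.elim_comp_inr, zero_mulVec,
    one_mulVec, zero_add, neg_mulVec, ← mulVec_mulVec, ← mulVec_mulVec, ← mulVec_neg,
    ← mulVec_add, ← sub_eq_neg_add, ← hAu, mulVec_mulVec, hinv, one_mulVec]

lemma transferR_mulVec {d : ℕ} {A B : ℤ → Matrix (Fin d) (Fin d) ℂ} {lam : ℝ}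
    {u : ℤ → Fin d → ℂ} (hA : ∀ n : ℤ, 0 ≤ n → IsUnit (A n))
    (hu : ∀ n : ℤ, 0 ≤ n →
      (A (n - 1))ᴴ *ᵥ u (n - 1) + B n *ᵥ u n + A n *ᵥ u (n + 1) = (lam : ℂ) • u n)
    (n : ℕ) :
    transferR A B lam n *ᵥ Sum.elim (u (-1)) (u 0) = Sum.elim (u (n - 1)) (u n) := by
  induction n with
  | zero => simp [transferR]
  | succ n ih =>
    rw [transferR, ← mulVec_mulVec, ih,
      transferT_mulVec (hA n n.cast_nonneg) (hu n n.cast_nonneg)]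
    push_cast
    rw [add_sub_cancel_right]

lemma sum_Icc_pair_eq (g : ℤ → ℝ) (N : ℕ) :
    ∑ k ∈ Finset.Icc 1 N, (g ((k : ℤ) - 1) + g k) =
      2 * ∑ k ∈ Finset.range (N + 1), g k - g 0 - g N := by
  induction N with
  | zero => simp [two_mul]
  | succ N ih =>
    rw [Finset.sum_Icc_succ_top (by omega), ih, Finset.sum_range_succ _ (N + 1)]
    push_cast
    ring_nf

lemma sum_range_add_le_of_pair_le {g : ℤ → ℝ} {M : ℕ → ℝ} {c f : ℝ} {N : ℕ} (hN : 1 ≤ N)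
    (hg : ∀ k, 0 ≤ g k) (hf : 0 ≤ f) (hpair : ∀ k : ℕ, g ((k : ℤ) - 1) + g k ≤ M k * c) :
    ∑ k ∈ Finset.range (N + 1), g k + f * g ((N : ℤ) + 1) ≤
      c * (∑ k ∈ Finset.Icc 1 N, M k + f * M (N + 1)) := by
  have hsum : ∑ k ∈ Finset.Icc 1 N, (g ((k : ℤ) - 1) + g k) ≤ (∑ k ∈ Finset.Icc 1 N, M k) * c := by
    rw [Finset.sum_mul]
    exact Finset.sum_le_sum fun k _ => hpair k
  have hends : g 0 + g N ≤ ∑ k ∈ Finset.range (N + 1), g k := by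
    rw [Finset.sum_range_succ, add_le_add_iff_right]
    exact Finset.single_le_sum (f := fun k : ℕ => g k) (fun k _ => hg k) (Finset.mem_range.mpr hN)
  have hlast : g ((N : ℤ) + 1) ≤ M (N + 1) * c := by
    have := hpair (N + 1)
    push_cast at this
    rw [add_sub_cancel_right] at this
    linarith [hg N]
  rw [sum_Icc_pair_eq] at hsum
  linarith [mul_le_mul_of_nonneg_left hlast hf]

lemma le_sum_range_add_of_le_pair {g : ℤ → ℝ} {m : ℕ → ℝ} {c f : ℝ} {N : ℕ}
    (hg : ∀ k, 0 ≤ g k) (hf₀ : 0 ≤ f) (hf₁ : f ≤ 1)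
    (hpair : ∀ k : ℕ, m k * c ≤ g ((k : ℤ) - 1) + g k) :
    1 / 2 * c * (∑ k ∈ Finset.Icc 1 N, m k + f * m (N + 1)) ≤
      ∑ k ∈ Finset.range (N + 1), g k + f * g ((N : ℤ) + 1) := by
  have hsum : (∑ k ∈ Finset.Icc 1 N, m k) * c ≤ ∑ k ∈ Finset.Icc 1 N, (g ((k : ℤ) - 1) + g k) := by
    rw [Finset.sum_mul]
    exact Finset.sum_le_sum fun k _ => hpair k
  have hlast : f * (m (N + 1) * c) ≤ f * (g N + g ((N : ℤ) + 1)) := by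
    have := hpair (N + 1)
    push_cast at this
    rw [add_sub_cancel_right] at this
    exact mul_le_mul_of_nonneg_left this hf₀
  rw [sum_Icc_pair_eq] at hsum
  linarith [hg 0, mul_nonneg (sub_nonneg.2 hf₁) (hg N), mul_nonneg hf₀ (hg ((N : ℤ) + 1))]

theorem egev_transfer_bounds_general {d : ℕ} (A B : ℤ → Matrix (Fin d) (Fin d) ℂ)
    (hA : ∀ n : ℤ, 0 ≤ n → IsUnit (A n))
    (lam : ℝ) (u : ℤ → Fin d → ℂ)
    (hu : ∀ n : ℤ, 0 ≤ n →
      (A (n - 1))ᴴ.mulVec (u (n - 1)) + (B n).mulVec (u n) + (A n).mulVec (u (n + 1)) =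
        (lam : ℂ) • u n)
    (t : ℝ) (ht : 1 ≤ t) :
    (1 / 2) * (vnorm (u (-1)) ^ 2 + vnorm (u 0) ^ 2) *
        (∑ k ∈ Finset.Icc 1 ⌊t⌋₊, minMod (transferR A B lam k) ^ 2 +
          Int.fract t * minMod (transferR A B lam (⌊t⌋₊ + 1)) ^ 2) ≤
      (∑ k ∈ Finset.range (⌊t⌋₊ + 1), vnorm (u (k : ℤ)) ^ 2 +
        Int.fract t * vnorm (u ((⌊t⌋₊ : ℤ) + 1)) ^ 2) ∧
    (∑ k ∈ Finset.range (⌊t⌋₊ + 1), vnorm (u (k : ℤ)) ^ 2 +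
        Int.fract t * vnorm (u ((⌊t⌋₊ : ℤ) + 1)) ^ 2) ≤
      (vnorm (u (-1)) ^ 2 + vnorm (u 0) ^ 2) *
        (∑ k ∈ Finset.Icc 1 ⌊t⌋₊, opNorm (transferR A B lam k) ^ 2 +
          Int.fract t * opNorm (transferR A B lam (⌊t⌋₊ + 1)) ^ 2) := by
  set w : ℕ → EuclideanSpace ℂ (Fin d ⊕ Fin d) :=
    fun n => WithLp.toLp 2 (Sum.elim (u ((n : ℤ) - 1)) (u n))
  have hw : ∀ n : ℕ, ‖w n‖ ^ 2 = vnorm (u ((n : ℤ) - 1)) ^ 2 + vnorm (u n) ^ 2 :=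
    fun n => norm_toLp_sum_elim_sq _ _
  have hw₀ : ‖w 0‖ ^ 2 = vnorm (u (-1)) ^ 2 + vnorm (u 0) ^ 2 := by simpa using hw 0
  have hRw : ∀ n : ℕ, toEuclideanCLM (𝕜 := ℂ) (transferR A B lam n) (w 0) = w n := by
    intro n
    simp only [w, toEuclideanCLM_toLp, Nat.cast_zero, zero_sub, transferR_mulVec hA hu n]
  have hpair : ∀ n : ℕ, minMod (transferR A B lam n) ^ 2 * ‖w 0‖ ^ 2 ≤ ‖w n‖ ^ 2 ∧
      ‖w n‖ ^ 2 ≤ opNorm (transferR A B lam n) ^ 2 * ‖w 0‖ ^ 2 := fun n => by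
    rw [← hRw n]
    exact ⟨minMod_sq_mul_norm_sq_le _ _, norm_sq_le_opNorm_sq_mul_norm_sq _ _⟩
  rw [← hw₀]
  constructor
  · exact le_sum_range_add_of_le_pair (g := fun k => vnorm (u k) ^ 2)
      (fun _ => sq_nonneg _) (Int.fract_nonneg t) (Int.fract_lt_one t).le
      fun n => (hw n) ▸ (hpair n).1
  · exact sum_range_add_le_of_pair_le (g := fun k => vnorm (u k) ^ 2)
      (Nat.le_floor (by exact_mod_cast ht)) (fun _ => sq_nonneg _) (Int.fract_nonneg t)
      fun n => (hw n) ▸ (hpair n).2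

/-- If `u` is an extended generalized eigenvector for `λ`, then for every `t ≥ 1`,
`(1/2)(‖u_{−1}‖²+‖u_0‖²)⌊R(λ)⌋²_{[1,t]} ≤ ‖u‖²_{[0,t]} ≤ (‖u_{−1}‖²+‖u_0‖²)‖R(λ)‖²_{[1,t]}`. -/
theorem egev_transfer_bounds {d : ℕ} (A B : ℤ → Matrix (Fin d) (Fin d) ℂ)
    (hA : ∀ n : ℤ, 0 ≤ n → IsUnit (A n)) (hAm : A (-1) = -1)
    (hB : ∀ n : ℤ, 0 ≤ n → (B n).IsHermitian)
    (lam : ℝ) (u : ℤ → Fin d → ℂ)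
    (hu : ∀ n : ℤ, 0 ≤ n →
      (A (n - 1))ᴴ.mulVec (u (n - 1)) + (B n).mulVec (u n) + (A n).mulVec (u (n + 1)) =
        (lam : ℂ) • u n)
    (t : ℝ) (ht : 1 ≤ t) :
    (1 / 2) * (vnorm (u (-1)) ^ 2 + vnorm (u 0) ^ 2) *
        (∑ k ∈ Finset.Icc 1 ⌊t⌋₊, minMod (transferR A B lam k) ^ 2 +
          Int.fract t * minMod (transferR A B lam (⌊t⌋₊ + 1)) ^ 2) ≤
      (∑ k ∈ Finset.range (⌊t⌋₊ + 1), vnorm (u (k : ℤ)) ^ 2 +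
        Int.fract t * vnorm (u ((⌊t⌋₊ : ℤ) + 1)) ^ 2) ∧
    (∑ k ∈ Finset.range (⌊t⌋₊ + 1), vnorm (u (k : ℤ)) ^ 2 +
        Int.fract t * vnorm (u ((⌊t⌋₊ : ℤ) + 1)) ^ 2) ≤
      (vnorm (u (-1)) ^ 2 + vnorm (u 0) ^ 2) *
        (∑ k ∈ Finset.Icc 1 ⌊t⌋₊, opNorm (transferR A B lam k) ^ 2 +
          Int.fract t * opNorm (transferR A B lam (⌊t⌋₊ + 1)) ^ 2) :=
  egev_transfer_bounds_general A B hA lam u hu t ht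
end
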